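/- arXiv:1301.7103 — 2 statements merged into one kernel-verified Lean document; each statement's English description precedes it below -/
import Mathlib

section
/- Let K/F be a finite Galois extension of number fields with group G, k a finite field of characteristic ℓ, and M a finite k[G]-module that is simple as an F_ℓ[G_F]-module with End_{F_ℓ[G_F]}(M) = k and H¹(G, M) = 0. For a nonzero class ξ ∈ H¹(G_F, M), let K(ξ) be the fixed field of the kernel of the restriction of ξ to G_K. Then the restriction ξ : Gal(K(ξ)/K) → M is an isomorphism of G-modules. -/
/-- Let `K/F` be a finite Galois extension of number fields with group
`G = Gal(K/F)`, `k` a finite field of characteristic `ℓ`, and `M` a finite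
`k[G]`-module (inflated to `G_F`, i.e. trivial on `G_K`) which is simple as an
`𝔽_ℓ[G_F]`-module with `End_{𝔽_ℓ[G_F]}(M) = k` and `H¹(G, M) = 0`.  For a
nonzero class `ξ ∈ H¹(G_F, M)` (a cocycle that is not a coboundary), the
restriction of `ξ` to `G_K` is a homomorphism, and it induces an isomorphism of
`G`-modules `ξ : Gal(K(ξ)/K) → M` — i.e. the restriction of `ξ` to `G_K` is an
additive, `G_F`-equivariant, surjective map (so bijective after dividing by its
kernel, whose fixed field is `K(ξ)`). -/
theorem stmt_5 (ℓ : ℕ) [Fact ℓ.Prime] (k : Type) [Field k] [Finite k] [CharP k ℓ]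
    (F : Type) [Field F] [NumberField F]
    (K : IntermediateField F (AlgebraicClosure F))
    [FiniteDimensional F K] [IsGalois F K]
    (V : Type) [AddCommGroup V] [Module k V] [Finite V] [Nontrivial V]
    (ρ : Representation k (AlgebraicClosure F ≃ₐ[F] AlgebraicClosure F) V)
    -- `M` is inflated from `G = Gal(K/F)`: it is trivial on `G_K`
    (htriv : ∀ σ ∈ K.fixingSubgroup, ρ σ = LinearMap.id)
    -- `M` is a simple `𝔽_ℓ[G_F]`-module
    (hsimple : ∀ W : AddSubgroup V, (∀ σ, ∀ v ∈ W, ρ σ v ∈ W) → W = ⊥ ∨ W = ⊤)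
    -- `End_{𝔽_ℓ[G_F]}(M) = k`
    (hend : ∀ f : V →+ V, (∀ σ v, f (ρ σ v) = ρ σ (f v)) → ∃ c : k, ∀ v, f v = c • v)
    -- `H¹(G, M) = 0`: every inflated cocycle is a coboundary
    (hH1 : ∀ c : (AlgebraicClosure F ≃ₐ[F] AlgebraicClosure F) → V,
      (∀ σ τ, c (σ * τ) = c σ + ρ σ (c τ)) →
      (∀ σ τ, τ ∈ K.fixingSubgroup → c (σ * τ) = c σ) →
      ∃ v : V, ∀ σ, c σ = ρ σ v - v)
    -- `ξ` is a cocycle representing a nonzero class in `H¹(G_F, M)`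
    (ξ : (AlgebraicClosure F ≃ₐ[F] AlgebraicClosure F) → V)
    (hcoc : ∀ σ τ, ξ (σ * τ) = ξ σ + ρ σ (ξ τ))
    (hnz : ¬ ∃ v : V, ∀ σ, ξ σ = ρ σ v - v) :
    -- restricted to `G_K`, `ξ` is an additive homomorphism …
    (∀ σ τ, σ ∈ K.fixingSubgroup → τ ∈ K.fixingSubgroup → ξ (σ * τ) = ξ σ + ξ τ) ∧
    -- … which is `G`-equivariant …
    (∀ γ σ, σ ∈ K.fixingSubgroup → ξ (γ * σ * γ⁻¹) = ρ γ (ξ σ)) ∧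
    -- … and surjective onto `M`
    Function.Surjective (fun σ : K.fixingSubgroup => ξ σ) := by
  classical
  have h1 : ξ 1 = 0 := by
    have h := hcoc 1 1
    simp only [mul_one, map_one, Module.End.one_apply] at h
    exact (left_eq_add.mp h)
  have hinv : ∀ σ, ξ σ⁻¹ = - ρ σ⁻¹ (ξ σ) := by
    intro σ
    have h := hcoc σ⁻¹ σ
    rw [inv_mul_cancel, h1] at h
    exact eq_neg_of_add_eq_zero_left h.symm
  -- additivity
  have hadd : ∀ σ τ, σ ∈ K.fixingSubgroup → τ ∈ K.fixingSubgroup →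
      ξ (σ * τ) = ξ σ + ξ τ := by
    intro σ τ hσ _
    rw [hcoc σ τ, htriv σ hσ]; rfl
  -- equivariance
  have hequiv : ∀ γ σ, σ ∈ K.fixingSubgroup → ξ (γ * σ * γ⁻¹) = ρ γ (ξ σ) := by
    intro γ σ hσ
    have h2 : ξ (γ * σ * γ⁻¹) = ξ γ + ρ γ (ξ σ) + ρ γ (ρ σ (ξ γ⁻¹)) := by
      rw [mul_assoc, hcoc γ (σ * γ⁻¹), hcoc σ γ⁻¹, map_add, add_assoc]
    rw [htriv σ hσ] at h2
    simp only [LinearMap.id_coe, id_eq] at h2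
    rw [hinv γ, map_neg] at h2
    have h3 : ρ γ (ρ γ⁻¹ (ξ γ)) = ξ γ := by
      have : ρ γ * ρ γ⁻¹ = 1 := by rw [← map_mul, mul_inv_cancel, map_one]
      calc ρ γ (ρ γ⁻¹ (ξ γ)) = (ρ γ * ρ γ⁻¹) (ξ γ) := rfl
        _ = ξ γ := by rw [this]; rfl
    rw [h3] at h2
    rw [h2]; abel
  refine ⟨hadd, hequiv, ?_⟩
  -- surjectivity via simplicity
  set W : AddSubgroup V :=
    { carrier := Set.range (fun σ : K.fixingSubgroup => ξ σ)
      zero_mem' := ⟨⟨1, one_mem _⟩, h1⟩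
      add_mem' := by
        rintro a b ⟨σ, rfl⟩ ⟨τ, rfl⟩
        refine ⟨σ * τ, ?_⟩
        show ξ (↑σ * ↑τ) = ξ ↑σ + ξ ↑τ
        exact hadd _ _ σ.2 τ.2
      neg_mem' := by
        rintro a ⟨σ, rfl⟩
        refine ⟨σ⁻¹, ?_⟩
        show ξ (σ : _)⁻¹ = -ξ σ
        rw [hinv, htriv _ (inv_mem σ.2)]; rfl } with hW
  have hstab : ∀ γ, ∀ v ∈ W, ρ γ v ∈ W := by
    rintro γ v ⟨σ, rfl⟩
    refine ⟨⟨γ * σ * γ⁻¹, Subgroup.Normal.conj_mem inferInstance σ.1 σ.2 γ⟩, ?_⟩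
    exact hequiv γ σ.1 σ.2
  rcases hsimple W hstab with hbot | htop
  · -- W = ⊥ means ξ vanishes on G_K, so ξ is inflated, hence a coboundary
    exfalso
    apply hnz
    apply hH1 ξ hcoc
    intro σ τ hτ
    have : ξ τ = 0 := by
      have : ξ τ ∈ W := ⟨⟨τ, hτ⟩, rfl⟩
      rwa [hbot, AddSubgroup.mem_bot] at this
    rw [hcoc σ τ, this, map_zero, add_zero]
  · intro v
    have : v ∈ W := by rw [htop]; trivial
    exact this
end

section
/- With K/F, G, M as above (M simple over F_ℓ[G_F] with endomorphism ring k and H¹(G,M)=0): if ψ₁, …, ψ_n are linearly independent classes in the k-vector space H¹(G_F, M), then the fields K(ψ₁), …, K(ψ_n) are linearly disjoint over K. -/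
set_option maxHeartbeats 800000

lemma fixing_conj_mem {F L : Type*} [Field F] [Field L] [Algebra F L]
    (K : IntermediateField F L) [Normal F K]
    (g τ : L ≃ₐ[F] L) (hτ : τ ∈ K.fixingSubgroup) :
    g * τ * g⁻¹ ∈ K.fixingSubgroup := by
  rw [IntermediateField.mem_fixingSubgroup_iff]
  intro x hx
  have h1 : g⁻¹ x ∈ K := by
    have h := (g⁻¹).restrictNormal_commutes K ⟨x, hx⟩
    rw [show ((algebraMap K L) ⟨x, hx⟩) = x from rfl] at h
    rw [← h]
    exact SetLike.coe_mem _
  have h2 : τ (g⁻¹ x) = g⁻¹ x := (K.mem_fixingSubgroup_iff τ).mp hτ _ h1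
  show (g * τ * g⁻¹) x = x
  rw [AlgEquiv.mul_apply, AlgEquiv.mul_apply, h2]
  exact g.apply_symm_apply x

lemma stmt6_aux (k : Type) [Field k]
    (F : Type) [Field F]
    (K : IntermediateField F (AlgebraicClosure F)) [IsGalois F K]
    (V : Type) [AddCommGroup V] [Module k V]
    (ρ : Representation k (AlgebraicClosure F ≃ₐ[F] AlgebraicClosure F) V)
    (htriv : ∀ σ ∈ K.fixingSubgroup, ρ σ = LinearMap.id)
    (hsimple : ∀ W : AddSubgroup V, (∀ σ, ∀ v ∈ W, ρ σ v ∈ W) → W = ⊥ ∨ W = ⊤)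
    (hend : ∀ f : V →+ V, (∀ σ v, f (ρ σ v) = ρ σ (f v)) → ∃ c : k, ∀ v, f v = c • v)
    (hH1 : ∀ c : (AlgebraicClosure F ≃ₐ[F] AlgebraicClosure F) → V,
      (∀ σ τ, c (σ * τ) = c σ + ρ σ (c τ)) →
      (∀ σ τ, τ ∈ K.fixingSubgroup → c (σ * τ) = c σ) →
      ∃ v : V, ∀ σ, c σ = ρ σ v - v) :
    ∀ (n : ℕ) (ψ : Fin n → (AlgebraicClosure F ≃ₐ[F] AlgebraicClosure F) → V),
      (∀ i σ τ, ψ i (σ * τ) = ψ i σ + ρ σ (ψ i τ)) →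
      (∀ c : Fin n → k,
        (∃ v : V, ∀ σ, (∑ i, c i • ψ i σ) = ρ σ v - v) → c = 0) →
      Function.Surjective (fun σ : K.fixingSubgroup => (fun i => ψ i σ : Fin n → V)) := by
  intro n
  induction n with
  | zero =>
    intro ψ _ _ y
    exact ⟨1, funext fun i => i.elim0⟩
  | succ m ih =>
    intro ψ hcoc hindep
    -- basic cocycle facts
    have hone : ∀ i, ψ i 1 = 0 := by
      intro i
      have h := hcoc i 1 1
      rw [mul_one, map_one] at h
      simpa using h.symm
    have hK : ∀ i (σ : AlgebraicClosure F ≃ₐ[F] AlgebraicClosure F),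
        σ ∈ K.fixingSubgroup → ∀ τ, ψ i (σ * τ) = ψ i σ + ψ i τ := by
      intro i σ hσ τ
      rw [hcoc i σ τ, htriv σ hσ]
      rfl
    have hKadd : ∀ i (σ τ : K.fixingSubgroup), ψ i ↑(σ * τ) = ψ i ↑σ + ψ i ↑τ := by
      intro i σ τ
      exact hK i σ σ.2 τ
    have hKinv : ∀ i (σ : K.fixingSubgroup), ψ i ↑(σ⁻¹) = - ψ i ↑σ := by
      intro i σ
      have h := hK i σ σ.2 ↑(σ⁻¹)
      rw [show (↑σ * ↑(σ⁻¹) : AlgebraicClosure F ≃ₐ[F] AlgebraicClosure F) = 1 by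
        rw [← Subgroup.coe_mul, mul_inv_cancel, Subgroup.coe_one], hone] at h
      have h2 : ψ i ↑σ⁻¹ + ψ i ↑σ = 0 := by rw [add_comm]; exact h.symm
      exact eq_neg_of_add_eq_zero_left h2
    have hconj : ∀ (i : Fin (m + 1)) (σ : AlgebraicClosure F ≃ₐ[F] AlgebraicClosure F)
        (τ : K.fixingSubgroup), ψ i (σ * ↑τ * σ⁻¹) = ρ σ (ψ i ↑τ) := by
      intro i σ τ
      have h0 : ψ i σ + ρ σ (ψ i σ⁻¹) = 0 := by
        rw [← hcoc i σ σ⁻¹, mul_inv_cancel, hone]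
      have h1 : ψ i (σ * ↑τ * σ⁻¹) = ψ i (σ * ↑τ) + ρ (σ * ↑τ) (ψ i σ⁻¹) := hcoc _ _ _
      rw [hcoc i σ ↑τ, map_mul, htriv ↑τ τ.2] at h1
      simp only [Module.End.mul_apply, LinearMap.id_apply] at h1
      rw [h1]
      rw [show ψ i σ + ρ σ (ψ i ↑τ) + ρ σ (ψ i σ⁻¹)
          = ρ σ (ψ i ↑τ) + (ψ i σ + ρ σ (ψ i σ⁻¹)) by abel, h0, add_zero]
    have hnormal : ∀ (σ : AlgebraicClosure F ≃ₐ[F] AlgebraicClosure F) (τ : K.fixingSubgroup),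
        σ * ↑τ * σ⁻¹ ∈ K.fixingSubgroup := fun σ τ => fixing_conj_mem K σ ↑τ τ.2
    -- induction hypothesis applied to the first m cocycles
    have hsurjm : Function.Surjective
        (fun σ : K.fixingSubgroup => (fun i : Fin m => ψ i.castSucc ↑σ)) := by
      apply ih (fun i => ψ i.castSucc) (fun i σ τ => hcoc i.castSucc σ τ)
      intro c ⟨v, hv⟩
      have hc' := hindep (Fin.snoc c 0) ⟨v, by
        intro σ
        rw [Fin.sum_univ_castSucc]
        simp only [Fin.snoc_castSucc, Fin.snoc_last, zero_smul, add_zero]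
        exact hv σ⟩
      funext i
      have := congrFun hc' i.castSucc
      simpa using this
    -- the subgroup of possible last coordinates over zero
    obtain ⟨W, hWmem⟩ : ∃ W : AddSubgroup V, ∀ v : V, v ∈ W ↔ (∃ τ : K.fixingSubgroup,
        (∀ i : Fin m, ψ i.castSucc ↑τ = 0) ∧ ψ (Fin.last m) ↑τ = v) := by
      refine ⟨{
        carrier := {v : V | ∃ τ : K.fixingSubgroup, (∀ i : Fin m, ψ i.castSucc ↑τ = 0) ∧ ψ (Fin.last m) ↑τ = v}
        zero_mem' := ⟨1, fun i => by simpa using hone i.castSucc, by simpa using hone (Fin.last m)⟩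
        add_mem' := by
          rintro a b ⟨τ, hτ, hτ'⟩ ⟨π, hπ, hπ'⟩
          exact ⟨τ * π, fun i => by rw [hKadd, hτ i, hπ i, add_zero],
            by rw [hKadd, hτ', hπ']⟩
        neg_mem' := by
          rintro a ⟨τ, hτ, hτ'⟩
          exact ⟨τ⁻¹, fun i => by rw [hKinv, hτ i, neg_zero], by rw [hKinv, hτ']⟩ },
        fun v => Iff.rfl⟩
    have hstab : ∀ σ : AlgebraicClosure F ≃ₐ[F] AlgebraicClosure F, ∀ v ∈ W, ρ σ v ∈ W := by
      intro σ v hv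
      obtain ⟨τ, hτ, hτ'⟩ := (hWmem v).mp hv
      refine (hWmem (ρ σ v)).mpr
        ⟨⟨σ * (↑τ : AlgebraicClosure F ≃ₐ[F] AlgebraicClosure F) * σ⁻¹, hnormal σ τ⟩,
          fun i => ?_, ?_⟩
      · show ψ i.castSucc (σ * (↑τ : AlgebraicClosure F ≃ₐ[F] AlgebraicClosure F) * σ⁻¹) = 0
        rw [hconj, hτ i, map_zero]
      · show ψ (Fin.last m) (σ * (↑τ : AlgebraicClosure F ≃ₐ[F] AlgebraicClosure F) * σ⁻¹) = ρ σ v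
        rw [hconj, hτ']
    rcases hsimple W hstab with hbot | htop
    · -- W = ⊥ : derive a contradiction with linear independence
      exfalso
      have huniq : ∀ τ : K.fixingSubgroup, (∀ i : Fin m, ψ i.castSucc ↑τ = 0) →
          ψ (Fin.last m) ↑τ = 0 := by
        intro τ h
        have hm : ψ (Fin.last m) ↑τ ∈ W := (hWmem _).mpr ⟨τ, h, rfl⟩
        rwa [hbot, AddSubgroup.mem_bot] at hm
      have hex : ∀ w : Fin m → V, ∃ τ : K.fixingSubgroup, ∀ i, ψ i.castSucc ↑τ = w i := by
        intro w
        obtain ⟨τ, hτ⟩ := hsurjm w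
        exact ⟨τ, fun i => congrFun hτ i⟩
      choose t ht using hex
      have hf : ∀ (w : Fin m → V) (τ : K.fixingSubgroup), (∀ i, ψ i.castSucc ↑τ = w i) →
          ψ (Fin.last m) ↑τ = ψ (Fin.last m) ↑(t w) := by
        intro w τ hτ
        have h0 : ∀ i : Fin m, ψ i.castSucc ↑(τ * (t w)⁻¹) = 0 := by
          intro i
          rw [hKadd, hKinv, hτ i, ht w i, add_neg_cancel]
        have h1 := huniq (τ * (t w)⁻¹) h0
        rw [hKadd, hKinv, add_neg_eq_zero] at h1
        exact h1
      have h0' : ψ (Fin.last m) ↑(t 0) = 0 := by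
        rw [← hf 0 1 (fun i => by simpa using hone i.castSucc)]
        simpa using hone (Fin.last m)
      have hadd' : ∀ w w' : Fin m → V,
          ψ (Fin.last m) ↑(t (w + w')) = ψ (Fin.last m) ↑(t w) + ψ (Fin.last m) ↑(t w') := by
        intro w w'
        have hcomp : ∀ i, ψ i.castSucc ↑(t w * t w') = (w + w') i := by
          intro i
          rw [hKadd, ht w i, ht w' i]
          rfl
        have h2 := hf (w + w') (t w * t w') hcomp
        rw [hKadd] at h2
        exact h2.symm
      have hequi : ∀ (σ : AlgebraicClosure F ≃ₐ[F] AlgebraicClosure F) (w : Fin m → V),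
          ψ (Fin.last m) ↑(t (fun i => ρ σ (w i))) = ρ σ (ψ (Fin.last m) ↑(t w)) := by
        intro σ w
        have hmem2 := hnormal σ (t w)
        have hcomp : ∀ i, ψ i.castSucc
            ↑((⟨σ * (↑(t w) : AlgebraicClosure F ≃ₐ[F] AlgebraicClosure F) * σ⁻¹,
              hmem2⟩ : K.fixingSubgroup)) = ρ σ (w i) := by
          intro i
          show ψ i.castSucc (σ * (↑(t w) : AlgebraicClosure F ≃ₐ[F] AlgebraicClosure F) * σ⁻¹)
            = ρ σ (w i)
          rw [hconj, ht w i]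
        have h2 := hf (fun i => ρ σ (w i)) _ hcomp
        rw [← h2]
        show ψ (Fin.last m) (σ * (↑(t w) : AlgebraicClosure F ≃ₐ[F] AlgebraicClosure F) * σ⁻¹)
          = ρ σ (ψ (Fin.last m) ↑(t w))
        rw [hconj]
      have hc : ∀ j : Fin m, ∃ c : k, ∀ v : V, ψ (Fin.last m) ↑(t (Pi.single j v)) = c • v := by
        intro j
        refine hend ⟨⟨fun v => ψ (Fin.last m) ↑(t (Pi.single j v)), ?_⟩, ?_⟩ ?_
        · show ψ (Fin.last m) ↑(t (Pi.single j (0 : V))) = 0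
          rw [Pi.single_zero]
          exact h0'
        · intro a b
          show ψ (Fin.last m) ↑(t (Pi.single j (a + b))) = _
          rw [Pi.single_add]
          exact hadd' _ _
        · intro σ v
          have hsingle : (Pi.single j (ρ σ v) : Fin m → V)
              = fun i => ρ σ ((Pi.single j v : Fin m → V) i) := by
            funext i
            by_cases h : i = j
            · subst h; simp
            · simp [Pi.single_eq_of_ne h]
          show ψ (Fin.last m) ↑(t (Pi.single j (ρ σ v))) = ρ σ (ψ (Fin.last m) ↑(t (Pi.single j v)))
          rw [hsingle, hequi]
      choose c hc using hc
      have hformula : ∀ τ : K.fixingSubgroup,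
          ψ (Fin.last m) ↑τ = ∑ j : Fin m, c j • ψ j.castSucc ↑τ := by
        intro τ
        have h1 : ψ (Fin.last m) ↑τ = ψ (Fin.last m) ↑(t (fun i => ψ i.castSucc ↑τ)) :=
          hf _ τ (fun i => rfl)
        rw [h1]
        have hFmap := map_sum
          (⟨⟨fun w => ψ (Fin.last m) ↑(t w), h0'⟩, fun a b => hadd' a b⟩ : (Fin m → V) →+ V)
          (fun j : Fin m => Pi.single j (ψ j.castSucc ↑τ)) Finset.univ
        have hFmap' : ψ (Fin.last m) ↑(t (∑ j : Fin m, Pi.single j (ψ j.castSucc ↑τ)))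
            = ∑ j : Fin m, ψ (Fin.last m) ↑(t (Pi.single j (ψ j.castSucc ↑τ))) := hFmap
        have hsum : (fun i => ψ i.castSucc (↑τ : AlgebraicClosure F ≃ₐ[F] AlgebraicClosure F))
            = ∑ j : Fin m, Pi.single j (ψ j.castSucc ↑τ) := by
          rw [Finset.univ_sum_single]
        rw [hsum, hFmap']
        exact Finset.sum_congr rfl (fun j _ => hc j _)
      -- the combined cocycle is a coboundary
      have hφcoc : ∀ σ τ : AlgebraicClosure F ≃ₐ[F] AlgebraicClosure F,
          (fun σ => ψ (Fin.last m) σ - ∑ j : Fin m, c j • ψ j.castSucc σ) (σ * τ)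
          = (fun σ => ψ (Fin.last m) σ - ∑ j : Fin m, c j • ψ j.castSucc σ) σ
            + ρ σ ((fun σ => ψ (Fin.last m) σ - ∑ j : Fin m, c j • ψ j.castSucc σ) τ) := by
        intro σ τ
        simp only [hcoc, smul_add, Finset.sum_add_distrib, map_sub, map_sum, map_smul]
        abel
      have hφtriv : ∀ σ τ : AlgebraicClosure F ≃ₐ[F] AlgebraicClosure F, τ ∈ K.fixingSubgroup →
          (fun σ => ψ (Fin.last m) σ - ∑ j : Fin m, c j • ψ j.castSucc σ) (σ * τ)
          = (fun σ => ψ (Fin.last m) σ - ∑ j : Fin m, c j • ψ j.castSucc σ) σ := by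
        intro σ τ hτ
        rw [hφcoc σ τ]
        have h0 : ψ (Fin.last m) τ - ∑ j : Fin m, c j • ψ j.castSucc τ = 0 := by
          rw [sub_eq_zero]
          exact hformula ⟨τ, hτ⟩
        show _ + ρ σ (ψ (Fin.last m) τ - ∑ j : Fin m, c j • ψ j.castSucc τ) = _
        rw [h0, map_zero, add_zero]
      obtain ⟨v, hv⟩ := hH1 (fun σ => ψ (Fin.last m) σ - ∑ j : Fin m, c j • ψ j.castSucc σ) hφcoc hφtriv
      have hc0 := hindep (Fin.snoc (fun j => -(c j)) (1 : k)) ⟨v, by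
        intro σ
        rw [Fin.sum_univ_castSucc]
        simp only [Fin.snoc_castSucc, Fin.snoc_last, one_smul, neg_smul]
        rw [← hv σ]
        show (∑ j, -(c j • ψ j.castSucc σ)) + ψ (Fin.last m) σ
          = ψ (Fin.last m) σ - ∑ j : Fin m, c j • ψ j.castSucc σ
        rw [sub_eq_add_neg, ← Finset.sum_neg_distrib]
        abel⟩
      have hlast := congrFun hc0 (Fin.last m)
      rw [Fin.snoc_last] at hlast
      exact one_ne_zero hlast
    · -- W = ⊤ : conclude surjectivity
      intro y
      obtain ⟨τ₀, hτ₀⟩ := hsurjm (fun i => y i.castSucc)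
      have hmem : (y (Fin.last m) - ψ (Fin.last m) ↑τ₀) ∈ W := htop ▸ AddSubgroup.mem_top _
      obtain ⟨τ₁, h1, h2⟩ := (hWmem _).mp hmem
      refine ⟨τ₀ * τ₁, funext fun i => ?_⟩
      induction i using Fin.lastCases with
      | last => show ψ (Fin.last m) ↑(τ₀ * τ₁) = y (Fin.last m); rw [hKadd, h2]; abel
      | cast i =>
        show ψ i.castSucc ↑(τ₀ * τ₁) = y i.castSucc
        rw [hKadd, h1 i, add_zero]
        exact congrFun hτ₀ i



/-- Let `K/F` be a finite Galois extension of number fields with group `G`, `k` a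
finite field of characteristic `ℓ`, and `M` a finite `k[G]`-module (trivial on
`G_K`) which is simple as an `𝔽_ℓ[G_F]`-module with `End_{𝔽_ℓ[G_F]}(M) = k` and
`H¹(G, M) = 0`.  If `ψ₁, …, ψ_n` are linearly independent classes in the
`k`-vector space `H¹(G_F, M)`, then the fields `K(ψ₁), …, K(ψ_n)` are linearly
disjoint over `K`: the joint restriction map
`Gal(K(ψ₁)⋯K(ψ_n)/K) → ∏ᵢ Gal(K(ψᵢ)/K) ≅ Mⁿ`, `σ ↦ (ψ₁(σ), …, ψ_n(σ))`,
is surjective on `G_K`. -/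
theorem stmt_6 (ℓ : ℕ) [Fact ℓ.Prime] (k : Type) [Field k] [Finite k] [CharP k ℓ]
    (F : Type) [Field F] [NumberField F]
    (K : IntermediateField F (AlgebraicClosure F))
    [FiniteDimensional F K] [IsGalois F K]
    (V : Type) [AddCommGroup V] [Module k V] [Finite V] [Nontrivial V]
    (ρ : Representation k (AlgebraicClosure F ≃ₐ[F] AlgebraicClosure F) V)
    -- `M` is inflated from `G = Gal(K/F)`: it is trivial on `G_K`
    (htriv : ∀ σ ∈ K.fixingSubgroup, ρ σ = LinearMap.id)
    -- `M` is a simple `𝔽_ℓ[G_F]`-module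
    (hsimple : ∀ W : AddSubgroup V, (∀ σ, ∀ v ∈ W, ρ σ v ∈ W) → W = ⊥ ∨ W = ⊤)
    -- `End_{𝔽_ℓ[G_F]}(M) = k`
    (hend : ∀ f : V →+ V, (∀ σ v, f (ρ σ v) = ρ σ (f v)) → ∃ c : k, ∀ v, f v = c • v)
    -- `H¹(G, M) = 0`: every inflated cocycle is a coboundary
    (hH1 : ∀ c : (AlgebraicClosure F ≃ₐ[F] AlgebraicClosure F) → V,
      (∀ σ τ, c (σ * τ) = c σ + ρ σ (c τ)) →
      (∀ σ τ, τ ∈ K.fixingSubgroup → c (σ * τ) = c σ) →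
      ∃ v : V, ∀ σ, c σ = ρ σ v - v)
    -- `ψ₁, …, ψ_n` are cocycles …
    (n : ℕ) (ψ : Fin n → (AlgebraicClosure F ≃ₐ[F] AlgebraicClosure F) → V)
    (hcoc : ∀ i σ τ, ψ i (σ * τ) = ψ i σ + ρ σ (ψ i τ))
    -- … whose classes are linearly independent over `k` in `H¹(G_F, M)`
    (hindep : ∀ c : Fin n → k,
      (∃ v : V, ∀ σ, (∑ i, c i • ψ i σ) = ρ σ v - v) → c = 0) :
    Function.Surjective (fun σ : K.fixingSubgroup => (fun i => ψ i σ : Fin n → V)) := by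
  exact stmt6_aux k F K V ρ htriv hsimple hend hH1 n ψ hcoc hindep
end
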